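/- arXiv:1904.00505 — 2 statements merged into one kernel-verified Lean document; each statement's English description precedes it below -/
import Mathlib

section
/- Let f be continuous on the closed unit disk {z ∈ ℂ : |z| ≤ 1}, holomorphic on the open unit disk, with f having no zeros in the open unit disk and f(0) ≠ 0. Then f(e^{iθ}) ≠ 0 for almost every θ ∈ [-π, π) with respect to Lebesgue measure. -/
/-!
Since `f` has no zeros in the open disk, `log ‖f‖` is harmonic there. If `C` bounds `‖f‖` on the
closed disk, the mean value property makes `θ ↦ log C - log ‖f (r e^{iθ})‖` a nonnegative function
with integral `2π (log C - log ‖f 0‖)` for every `r < 1`. By Fatou's lemma these functions cannot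
tend to `+∞` as `r → 1` on a set of positive measure, whereas by continuity of `f` they do so at
every `θ` with `f (e^{iθ}) = 0`.
-/

open Complex MeasureTheory Metric Set Filter Real InnerProductSpace
open scoped ENNReal Topology

theorem DifferentiableOn.harmonicOnNhd_log_norm {f : ℂ → ℂ} {U : Set ℂ} (hU : IsOpen U)
    (hf : DifferentiableOn ℂ f U) (hne : ∀ z ∈ U, f z ≠ 0) :
    HarmonicOnNhd (fun z => Real.log ‖f z‖) U := fun z hz =>
  (hf.analyticAt (hU.mem_nhds hz)).harmonicAt_log_norm (hne z hz)

theorem InnerProductSpace.HarmonicOnNhd.setIntegral_Ico_circleMap {E : Type*}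
    [NormedAddCommGroup E] [NormedSpace ℝ E] [CompleteSpace E] {g : ℂ → E} {c : ℂ} {R : ℝ}
    (hg : HarmonicOnNhd g (closedBall c |R|)) :
    ∫ θ in Ico (-π) π, g (circleMap c R θ) = (2 * π) • g c := by
  rw [← hg.circleAverage_eq, circleAverage_eq_integral_add (-π), smul_inv_smul₀ two_pi_pos.ne',
    intervalIntegral.integral_comp_add_right (fun θ => g (circleMap c R θ)),
    intervalIntegral.integral_of_le (by linarith [pi_pos]), setIntegral_congr_set Ico_ae_eq_Ioc]
  rw [zero_add, two_mul, add_neg_cancel_right]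

theorem tendsto_log_norm_atBot {ι : Type*} {l : Filter ι} {w : ι → ℂ}
    (hw : Tendsto w l (𝓝 0)) (hne : ∀ᶠ i in l, w i ≠ 0) :
    Tendsto (fun i => Real.log ‖w i‖) l atBot :=
  tendsto_log_nhdsGT_zero.comp <| tendsto_nhdsWithin_of_tendsto_nhds_of_eventually_within _
    (by simpa using hw.norm) (hne.mono fun _ => norm_pos_iff.2)

theorem ae_not_tendsto_atTop_of_integral_le {α : Type*} [MeasurableSpace α] {μ : Measure α}
    {u : ℕ → α → ℝ} (hmeas : ∀ i, Measurable (u i)) (hint : ∀ i, Integrable (u i) μ)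
    (hnonneg : ∀ i, 0 ≤ᵐ[μ] u i) {C : ℝ} (hC : ∀ i, ∫ x, u i x ∂μ ≤ C) :
    ∀ᵐ x ∂μ, ¬ Tendsto (fun i => u i x) atTop atTop := by
  set F : ℕ → α → ℝ≥0∞ := fun i x => ENNReal.ofReal (u i x)
  have hF : ∀ i, Measurable (F i) := fun i => ENNReal.measurable_ofReal.comp (hmeas i)
  have hlint : ∫⁻ x, liminf (fun i => F i x) atTop ∂μ ≠ ∞ := by
    refine ne_top_of_le_ne_top (ENNReal.ofReal_ne_top (r := C))
      ((lintegral_liminf_le hF).trans ?_)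
    refine liminf_le_of_frequently_le' (Frequently.of_forall fun i => ?_)
    rw [← ofReal_integral_eq_lintegral_ofReal (hint i) (hnonneg i)]
    exact ENNReal.ofReal_le_ofReal (hC i)
  filter_upwards [ae_lt_top (Measurable.liminf hF) hlint] with x hx htends
  exact hx.ne (ENNReal.tendsto_ofReal_atTop.comp htends).liminf_eq

theorem tendsto_log_norm_circleMap_atBot {f : ℂ → ℂ} {c : ℂ} {R θ : ℝ} (hR : 0 ≤ R)
    (hf : ContinuousOn f (closedBall c R)) (hne : ∀ z ∈ ball c R, f z ≠ 0)
    (hzero : f (circleMap c R θ) = 0) {ι : Type*} {l : Filter ι} {r : ι → ℝ}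
    (hr : ∀ i, |r i| < R) (hlim : Tendsto r l (𝓝 R)) :
    Tendsto (fun i => Real.log ‖f (circleMap c (r i) θ)‖) l atBot := by
  have hmem : ∀ i, circleMap c (r i) θ ∈ ball c R := fun i => by
    rw [mem_ball, dist_eq_norm, circleMap_sub_center, norm_circleMap_zero]; exact hr i
  have hradius : Continuous fun r : ℝ => circleMap c r θ := by unfold circleMap; fun_prop
  have hcircle : Tendsto (fun i => circleMap c (r i) θ) l (𝓝 (circleMap c R θ)) :=
    (hradius.tendsto R).comp hlim
  refine tendsto_log_norm_atBot ?_ (Eventually.of_forall fun i => hne _ (hmem i))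
  rw [← hzero]
  exact (hf _ (circleMap_mem_closedBall c hR θ)).tendsto.comp <|
    tendsto_nhdsWithin_of_tendsto_nhds_of_eventually_within _ hcircle
      (Eventually.of_forall fun i => ball_subset_closedBall (hmem i))

theorem stmt1_general (f : ℂ → ℂ)
    (hc : ContinuousOn f (Metric.closedBall 0 1))
    (hd : DifferentiableOn ℂ f (Metric.ball 0 1))
    (hnz : ∀ z ∈ Metric.ball (0:ℂ) 1, f z ≠ 0) :
    ∀ᵐ θ : ℝ ∂(MeasureTheory.volume.restrict (Set.Ico (-Real.pi) Real.pi)),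
      f (Complex.exp ((θ : ℂ) * Complex.I)) ≠ 0 := by
  obtain ⟨C, hC⟩ := (isCompact_closedBall (0:ℂ) 1).exists_bound_of_continuousOn hc
  obtain ⟨r, -, hr, hlim⟩ := exists_seq_strictMono_tendsto' (zero_lt_one' ℝ)
  have hr1 : ∀ n, |r n| < 1 := fun n => (abs_of_pos (hr n).1).trans_lt (hr n).2
  have hmem : ∀ n θ, circleMap 0 (r n) θ ∈ ball (0:ℂ) 1 := fun n θ => by
    rw [mem_ball, dist_zero_right, norm_circleMap_zero]; exact hr1 n
  set g : ℂ → ℝ := fun z => Real.log C - Real.log ‖f z‖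
  have hg : HarmonicOnNhd g (ball 0 1) :=
    (harmonicOnNhd_const _).sub (hd.harmonicOnNhd_log_norm isOpen_ball hnz)
  have hg_nonneg : ∀ z ∈ ball (0:ℂ) 1, 0 ≤ g z := fun z hz => sub_nonneg.2 <|
    log_le_log (norm_pos_iff.2 (hnz z hz)) (hC z (ball_subset_closedBall hz))
  have hcont : ∀ n, Continuous fun θ => g (circleMap 0 (r n) θ) := fun n =>
    hg.continuousOn.comp_continuous (continuous_circleMap 0 (r n)) (hmem n)
  have hfinite := ae_not_tendsto_atTop_of_integral_le
    (μ := volume.restrict (Ico (-π) π)) (u := fun n θ => g (circleMap 0 (r n) θ))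
    (fun n => (hcont n).measurable)
    (fun n => (hcont n).integrableOn_Icc.mono_set Ico_subset_Icc_self)
    (fun n => ae_of_all _ fun θ => hg_nonneg _ (hmem n θ))
    (fun n => ((hg.mono (closedBall_subset_ball (hr1 n))).setIntegral_Ico_circleMap).le)
  filter_upwards [hfinite] with θ hθ hzero
  have hlog := tendsto_log_norm_circleMap_atBot zero_le_one hc hnz
    (by simpa [circleMap_zero] using hzero) hr1 hlim
  exact hθ (tendsto_atTop_add_const_left _ _ (tendsto_neg_atBot_atTop.comp hlog))

/-- If `f` is continuous on the closed unit disk, holomorphic on the open unit disk,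
with no zeros in the open unit disk (in particular `f 0 ≠ 0`), then `f(e^{iθ}) ≠ 0` for
almost every `θ ∈ [-π, π)`. -/
theorem stmt1 (f : ℂ → ℂ)
    (hc : ContinuousOn f (Metric.closedBall 0 1))
    (hd : DifferentiableOn ℂ f (Metric.ball 0 1))
    (hnz : ∀ z ∈ Metric.ball (0:ℂ) 1, f z ≠ 0)
    (h0 : f 0 ≠ 0) :
    ∀ᵐ θ : ℝ ∂(MeasureTheory.volume.restrict (Set.Ico (-Real.pi) Real.pi)),
      f (Complex.exp ((θ : ℂ) * Complex.I)) ≠ 0 :=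
  stmt1_general f hc hd hnz
end

section
/- Let N ≥ 0, γ ∈ (0,1], and μ_{N,γ}(x) = (1+|x|²)^N (1+γ|x|²)^{-N} on ℝ^d. For each multi-index α there exists a smooth function b_α and a constant C_{α,β,N}, independent of γ ∈ (0,1], such that ∂_x^α μ_{N,γ}(x) = b_α(x) μ_{N,γ}(x) and |(1+|x|²)^{(|α|+|β|)/2} ∂_x^β b_α(x)| ≤ C_{α,β,N} for all multi-indices β and all x ∈ ℝ^d. -/
/-- Iterated partial derivative of `f : ℝ^d → ℝ` along a list of coordinate directions. -/
noncomputable def pderivL {d : ℕ} :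
    List (Fin d) → (EuclideanSpace ℝ (Fin d) → ℝ) → EuclideanSpace ℝ (Fin d) → ℝ
  | [], f => f
  | (i :: L), f => fun x => fderiv ℝ (pderivL L f) x (EuclideanSpace.single i 1)

namespace Stmt10Aux

open Real Set

variable {d : ℕ}

abbrev Ed (d : ℕ) := EuclideanSpace ℝ (Fin d)
abbrev I01 := Set.Ioc (0:ℝ) 1

lemma posA (x : Ed d) : 0 < 1 + ‖x‖ ^ 2 := by positivity
lemma posB (γ : I01) (x : Ed d) : 0 < 1 + (γ:ℝ) * ‖x‖ ^ 2 := by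
  have h := γ.2.1; positivity
lemma oneleA (x : Ed d) : 1 ≤ 1 + ‖x‖ ^ 2 := by nlinarith [sq_nonneg ‖x‖]

/-- Families of "symbols of order `m`", uniformly in `γ ∈ (0,1]`. -/
inductive Sym (d : ℕ) : ℤ → (I01 → Ed d → ℝ) → Prop
  | const (c : ℝ) : Sym d 0 (fun _ _ => c)
  | coord (j : Fin d) : Sym d 1 (fun _ x => x j)
  | U : Sym d (-2) (fun _ x => (1 + ‖x‖ ^ 2)⁻¹)
  | V : Sym d (-2) (fun γ x => (γ:ℝ) * (1 + (γ:ℝ) * ‖x‖ ^ 2)⁻¹)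
  | zero (m : ℤ) : Sym d m (fun _ _ => 0)
  | add {m F G} : Sym d m F → Sym d m G → Sym d m (fun γ x => F γ x + G γ x)
  | mul {m n F G} : Sym d m F → Sym d n G → Sym d (m + n) (fun γ x => F γ x * G γ x)
  | weaken {m m' F} : Sym d m F → m ≤ m' → Sym d m' F

lemma Sym.contDiff {m F} (h : Sym d m F) (γ : I01) : ContDiff ℝ (⊤ : ℕ∞) (F γ) := by
  induction h with
  | const c => exact contDiff_const
  | coord j => exact (EuclideanSpace.proj j : Ed d →L[ℝ] ℝ).contDiff
  | U => exact (contDiff_const.add (contDiff_norm_sq ℝ)).inv fun x => (posA x).ne'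
  | V =>
      exact contDiff_const.mul
        ((contDiff_const.add (contDiff_const.mul (contDiff_norm_sq ℝ))).inv
          fun x => (posB γ x).ne')
  | zero m => exact contDiff_const
  | add _ _ ih1 ih2 => exact ih1.add ih2
  | mul _ _ ih1 ih2 => exact ih1.mul ih2
  | weaken _ _ ih => exact ih

lemma Sym.diffAt {m F} (h : Sym d m F) (γ : I01) (x : Ed d) :
    DifferentiableAt ℝ (F γ) x :=
  ((h.contDiff γ).differentiable (by simp)).differentiableAt

lemma hA (x : Ed d) : HasFDerivAt (fun y : Ed d => 1 + ‖y‖ ^ 2)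
    ((0 : Ed d →L[ℝ] ℝ) + 2 • (innerSL ℝ x)) x :=
  (hasFDerivAt_const 1 x).add (hasStrictFDerivAt_norm_sq x).hasFDerivAt

lemma hB (γ : I01) (x : Ed d) : HasFDerivAt (fun y : Ed d => 1 + (γ:ℝ) * ‖y‖ ^ 2)
    ((0 : Ed d →L[ℝ] ℝ) + (γ:ℝ) • (2 • (innerSL ℝ x))) x :=
  (hasFDerivAt_const 1 x).add ((hasStrictFDerivAt_norm_sq x).hasFDerivAt.const_mul (γ:ℝ))

lemma evalA (x : Ed d) (i : Fin d) :
    ((0 : Ed d →L[ℝ] ℝ) + 2 • (innerSL ℝ x)) (EuclideanSpace.single i 1) = 2 * x i := by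
  simp [EuclideanSpace.inner_single_right, real_inner_comm]

lemma evalInner (x : Ed d) (i : Fin d) :
    ((innerSL ℝ) x) (EuclideanSpace.single i 1) = x i := by
  simp [EuclideanSpace.inner_single_right, real_inner_comm]

/-- Differentiation lowers the order of a symbol by one, within the class. -/
lemma Sym.deriv {m F} (h : Sym d m F) (i : Fin d) :
    Sym d (m - 1) (fun γ x => fderiv ℝ (F γ) x (EuclideanSpace.single i 1)) := by
  induction h with
  | const c =>
      rw [show (fun (γ : I01) (x : Ed d) =>
          fderiv ℝ (fun _ => c) x (EuclideanSpace.single i 1)) = fun _ _ => (0:ℝ) by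
        funext γ x; simp]
      exact Sym.zero _
  | coord j =>
      rw [show (fun (γ : I01) (x : Ed d) =>
          fderiv ℝ (fun y : Ed d => y j) x (EuclideanSpace.single i 1))
          = fun _ _ => (if j = i then (1:ℝ) else 0) by
        funext γ x
        rw [show (fun y : Ed d => y j) = (EuclideanSpace.proj j : Ed d →L[ℝ] ℝ) from rfl,
          ContinuousLinearMap.fderiv]
        simp [EuclideanSpace.single_apply]]
      exact (Sym.const _).weaken (by norm_num)
  | U =>
      rw [show (fun (γ : I01) (x : Ed d) =>
          fderiv ℝ (fun y : Ed d => (1 + ‖y‖ ^ 2)⁻¹) x (EuclideanSpace.single i 1))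
          = fun γ x => ((-2) * x i) * ((1 + ‖x‖ ^ 2)⁻¹ * (1 + ‖x‖ ^ 2)⁻¹) by
        funext γ x
        have h0 : (1 + ‖x‖ ^ 2) ≠ 0 := (posA x).ne'
        have h : HasFDerivAt (fun y : Ed d => (1 + ‖y‖ ^ 2)⁻¹)
            ((-((1 + ‖x‖ ^ 2) ^ 2)⁻¹) • ((0 : Ed d →L[ℝ] ℝ) + 2 • (innerSL ℝ x))) x :=
          (hasDerivAt_inv h0).comp_hasFDerivAt x (hA x)
        rw [h.fderiv, ContinuousLinearMap.smul_apply, evalA]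
        simp only [smul_eq_mul, sq, mul_inv]
        ring]
      exact ((((Sym.const (-2)).mul (Sym.coord i))).mul (Sym.U.mul Sym.U)).weaken (by norm_num)
  | V =>
      rw [show (fun (γ : I01) (x : Ed d) =>
          fderiv ℝ (fun y : Ed d => (γ:ℝ) * (1 + (γ:ℝ) * ‖y‖ ^ 2)⁻¹) x
            (EuclideanSpace.single i 1))
          = fun (γ : I01) x => ((-2) * x i) *
              (((γ:ℝ) * (1 + (γ:ℝ) * ‖x‖ ^ 2)⁻¹) * ((γ:ℝ) * (1 + (γ:ℝ) * ‖x‖ ^ 2)⁻¹)) by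
        funext γ x
        have h0 : (1 + (γ:ℝ) * ‖x‖ ^ 2) ≠ 0 := (posB γ x).ne'
        have h : HasFDerivAt (fun y : Ed d => (γ:ℝ) * (1 + (γ:ℝ) * ‖y‖ ^ 2)⁻¹)
            ((γ:ℝ) • ((-((1 + (γ:ℝ) * ‖x‖ ^ 2) ^ 2)⁻¹) •
              ((0 : Ed d →L[ℝ] ℝ) + (γ:ℝ) • (2 • (innerSL ℝ x))))) x :=
          ((hasDerivAt_inv h0).comp_hasFDerivAt x (hB γ x)).const_mul (γ:ℝ)
        rw [h.fderiv]
        simp only [ContinuousLinearMap.smul_apply, ContinuousLinearMap.add_apply,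
          ContinuousLinearMap.zero_apply, smul_eq_mul]
        rw [evalInner]
        simp only [sq, mul_inv, smul_eq_mul]
        ring]
      exact ((((Sym.const (-2)).mul (Sym.coord i))).mul (Sym.V.mul Sym.V)).weaken (by norm_num)
  | zero m =>
      rw [show (fun (γ : I01) (x : Ed d) =>
          fderiv ℝ (fun _ => (0:ℝ)) x (EuclideanSpace.single i 1)) = fun _ _ => (0:ℝ) by
        funext γ x; simp]
      exact Sym.zero _
  | add h1 h2 ih1 ih2 =>
      rename_i m' F G
      rw [show (fun (γ : I01) (x : Ed d) =>
          fderiv ℝ (fun y => F γ y + G γ y) x (EuclideanSpace.single i 1))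
          = fun γ x => fderiv ℝ (F γ) x (EuclideanSpace.single i 1)
              + fderiv ℝ (G γ) x (EuclideanSpace.single i 1) by
        funext γ x
        rw [fderiv_fun_add (h1.diffAt γ x) (h2.diffAt γ x), ContinuousLinearMap.add_apply]]
      exact ih1.add ih2
  | mul h1 h2 ih1 ih2 =>
      rename_i m1 m2 F G
      rw [show (fun (γ : I01) (x : Ed d) =>
          fderiv ℝ (fun y => F γ y * G γ y) x (EuclideanSpace.single i 1))
          = fun γ x => F γ x * fderiv ℝ (G γ) x (EuclideanSpace.single i 1)
              + G γ x * fderiv ℝ (F γ) x (EuclideanSpace.single i 1) by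
        funext γ x
        rw [fderiv_fun_mul (h1.diffAt γ x) (h2.diffAt γ x)]
        simp [smul_eq_mul]]
      exact ((h1.mul ih2).weaken (by omega)).add ((h2.mul ih1).weaken (by omega))
  | weaken h1 hle ih => exact ih.weaken (by omega)

lemma coord_sq_le (x : Ed d) (j : Fin d) : (x j) ^ 2 ≤ ‖x‖ ^ 2 := by
  have h : ‖x‖ ^ 2 = ∑ i, ‖x i‖ ^ 2 := by
    rw [EuclideanSpace.norm_eq, Real.sq_sqrt (by positivity)]
  rw [h]
  calc (x j) ^ 2 = ‖x j‖ ^ 2 := by rw [Real.norm_eq_abs, sq_abs]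
    _ ≤ ∑ i, ‖x i‖ ^ 2 :=
      Finset.single_le_sum (f := fun i => ‖x i‖ ^ 2) (fun i _ => by positivity)
        (Finset.mem_univ j)

/-- Uniform weighted bound for symbols of order `m`. -/
lemma Sym.bound {m F} (h : Sym d m F) :
    ∃ C : ℝ, 0 ≤ C ∧ ∀ (γ : I01) (x : Ed d), |F γ x| ≤ C * (1 + ‖x‖ ^ 2) ^ ((m:ℝ)/2) := by
  induction h with
  | const c =>
      exact ⟨|c|, abs_nonneg c, fun γ x => by
        rw [show ((0:ℤ):ℝ)/2 = (0:ℝ) by norm_num, Real.rpow_zero, mul_one]⟩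
  | coord j =>
      refine ⟨1, zero_le_one, fun γ x => ?_⟩
      rw [one_mul, show ((1:ℤ):ℝ)/2 = 1/(2:ℝ) by norm_num, ← Real.sqrt_eq_rpow]
      exact Real.abs_le_sqrt ((coord_sq_le x j).trans (by nlinarith [sq_nonneg ‖x‖]))
  | U =>
      refine ⟨1, zero_le_one, fun γ x => ?_⟩
      rw [one_mul, show ((-2:ℤ):ℝ)/2 = (-1:ℝ) by norm_num, Real.rpow_neg_one,
        abs_of_nonneg (by positivity)]
  | V =>
      refine ⟨2, by norm_num, fun γ x => ?_⟩
      have hγ0 := γ.2.1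
      have hγ1 := γ.2.2
      have hs : (0:ℝ) ≤ ‖x‖ ^ 2 := by positivity
      show |(γ:ℝ) * (1 + (γ:ℝ) * ‖x‖ ^ 2)⁻¹| ≤ _
      rw [show ((-2:ℤ):ℝ)/2 = (-1:ℝ) by norm_num, Real.rpow_neg_one,
        abs_of_nonneg (by positivity), ← div_eq_mul_inv, ← div_eq_mul_inv,
        div_le_div_iff₀ (posB γ x) (posA x)]
      nlinarith
  | zero m =>
      exact ⟨0, le_refl 0, fun γ x => by simp⟩
  | add h1 h2 ih1 ih2 =>
      obtain ⟨C1, hC1, hb1⟩ := ih1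
      obtain ⟨C2, hC2, hb2⟩ := ih2
      refine ⟨C1 + C2, by positivity, fun γ x => ?_⟩
      calc |_ + _| ≤ _ := abs_add_le _ _
        _ ≤ C1 * (1 + ‖x‖ ^ 2) ^ ((_:ℝ)/2) + C2 * (1 + ‖x‖ ^ 2) ^ ((_:ℝ)/2) :=
            add_le_add (hb1 γ x) (hb2 γ x)
        _ = _ := by ring
  | mul h1 h2 ih1 ih2 =>
      rename_i m1 m2 F G
      obtain ⟨C1, hC1, hb1⟩ := ih1
      obtain ⟨C2, hC2, hb2⟩ := ih2
      refine ⟨C1 * C2, by positivity, fun γ x => ?_⟩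
      have hw : (1 + ‖x‖ ^ 2) ^ (((m1 + m2 : ℤ):ℝ)/2)
          = (1 + ‖x‖ ^ 2) ^ ((m1:ℝ)/2) * (1 + ‖x‖ ^ 2) ^ ((m2:ℝ)/2) := by
        rw [← Real.rpow_add (posA x)]
        push_cast
        ring_nf
      rw [abs_mul, hw]
      calc |F γ x| * |G γ x|
          ≤ (C1 * (1 + ‖x‖ ^ 2) ^ ((m1:ℝ)/2)) * (C2 * (1 + ‖x‖ ^ 2) ^ ((m2:ℝ)/2)) :=
            mul_le_mul (hb1 γ x) (hb2 γ x) (abs_nonneg _) (by positivity)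
        _ = C1 * C2 * ((1 + ‖x‖ ^ 2) ^ ((m1:ℝ)/2) * (1 + ‖x‖ ^ 2) ^ ((m2:ℝ)/2)) := by ring
  | weaken h1 hle ih =>
      rename_i ma mb Fa
      obtain ⟨C, hC, hb⟩ := ih
      refine ⟨C, hC, fun γ x => (hb γ x).trans ?_⟩
      exact mul_le_mul_of_nonneg_left
        (Real.rpow_le_rpow_of_exponent_le (oneleA x)
          (by have : (ma:ℝ) ≤ mb := by exact_mod_cast hle
              linarith)) hC

noncomputable def mu (N : ℝ) (γ : I01) (x : Ed d) : ℝ :=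
  (1 + ‖x‖ ^ 2) ^ N * (1 + (γ:ℝ) * ‖x‖ ^ 2) ^ (-N)

lemma mu_hasFDerivAt (N : ℝ) (γ : I01) (x : Ed d) :
    HasFDerivAt (mu N γ)
      (((1 + ‖x‖ ^ 2) ^ N) • ((-N * (1 + (γ:ℝ) * ‖x‖ ^ 2) ^ (-N - 1)) •
          ((0 : Ed d →L[ℝ] ℝ) + (γ:ℝ) • (2 • (innerSL ℝ x))))
        + ((1 + (γ:ℝ) * ‖x‖ ^ 2) ^ (-N)) • ((N * (1 + ‖x‖ ^ 2) ^ (N - 1)) •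
          ((0 : Ed d →L[ℝ] ℝ) + 2 • (innerSL ℝ x)))) x :=
  HasFDerivAt.mul ((hA x).rpow_const (Or.inl (posA x).ne'))
    ((hB γ x).rpow_const (Or.inl (posB γ x).ne'))

lemma mu_diffAt (N : ℝ) (γ : I01) (x : Ed d) : DifferentiableAt ℝ (mu N γ) x :=
  (mu_hasFDerivAt N γ x).differentiableAt

noncomputable def b1 (N : ℝ) (i : Fin d) (γ : I01) (x : Ed d) : ℝ :=
  (2 * N * x i) * (1 + ‖x‖ ^ 2)⁻¹ +
    ((-2) * N * x i) * ((γ:ℝ) * (1 + (γ:ℝ) * ‖x‖ ^ 2)⁻¹)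

lemma fderiv_mu (N : ℝ) (γ : I01) (i : Fin d) (x : Ed d) :
    fderiv ℝ (mu N γ) x (EuclideanSpace.single i 1) = b1 N i γ x * mu N γ x := by
  rw [(mu_hasFDerivAt N γ x).fderiv]
  simp only [ContinuousLinearMap.add_apply, ContinuousLinearMap.smul_apply,
    ContinuousLinearMap.zero_apply, smul_eq_mul, evalInner]
  have hAne : (1 + ‖x‖ ^ 2) ≠ 0 := (posA x).ne'
  have hBne : (1 + (γ:ℝ) * ‖x‖ ^ 2) ≠ 0 := (posB γ x).ne'
  rw [Real.rpow_sub_one hBne, Real.rpow_sub_one hAne]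
  unfold b1 mu
  field_simp
  ring

lemma sym_b1 (N : ℝ) (i : Fin d) : Sym d (-1) (b1 N i) :=
  ((((Sym.const (2 * N)).mul (Sym.coord i)).mul Sym.U).weaken (by norm_num)).add
    (((((Sym.const ((-2) * N)).mul (Sym.coord i)).mul Sym.V)).weaken (by norm_num))

/-- Representation `∂^α μ = F_α μ` with `F_α` a uniform symbol of order `-|α|`. -/
lemma mu_repr (N : ℝ) (α : List (Fin d)) :
    ∃ F : I01 → Ed d → ℝ, Sym d (-(α.length : ℤ)) F ∧
      ∀ γ : I01, pderivL α (mu N γ) = fun x => F γ x * mu N γ x := by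
  induction α with
  | nil =>
      refine ⟨fun _ _ => 1, (Sym.const 1).weaken (by simp), fun γ => ?_⟩
      funext x
      show mu N γ x = 1 * mu N γ x
      rw [one_mul]
  | cons i α ih =>
      obtain ⟨F, hS, hE⟩ := ih
      refine ⟨fun γ x => fderiv ℝ (F γ) x (EuclideanSpace.single i 1) + F γ x * b1 N i γ x,
        ((hS.deriv i).add ((hS.mul (sym_b1 N i)).weaken (by omega))).weaken
          (by simp [List.length_cons]; omega), fun γ => ?_⟩
      funext x
      show fderiv ℝ (pderivL α (mu N γ)) x (EuclideanSpace.single i 1) = _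
      rw [hE γ, fderiv_fun_mul (hS.diffAt γ x) (mu_diffAt N γ x)]
      simp only [ContinuousLinearMap.add_apply, ContinuousLinearMap.smul_apply, smul_eq_mul]
      rw [fderiv_mu N γ i x]
      ring

end Stmt10Aux

open Stmt10Aux in
/-- For `μ_{N,γ}(x) = (1+|x|²)^N (1+γ|x|²)^(-N)` and each multi-index `α` (a list of
coordinate directions), there exist bounds `C_{α,β,N}` independent of `γ ∈ (0,1]` and,
for each `γ`, a smooth function `b_α` with `∂^α μ_{N,γ} = b_α μ_{N,γ}` and
`|(1+|x|²)^((|α|+|β|)/2) ∂^β b_α(x)| ≤ C_{α,β,N}` for every multi-index `β`. -/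
theorem stmt10 (d : ℕ) (N : ℝ) (hN : 0 ≤ N) (α : List (Fin d)) :
    ∃ C : List (Fin d) → ℝ, ∀ γ ∈ Set.Ioc (0:ℝ) 1,
      ∃ b : EuclideanSpace ℝ (Fin d) → ℝ,
        ContDiff ℝ (⊤ : ℕ∞) b ∧
        (∀ x, pderivL α
            (fun x : EuclideanSpace ℝ (Fin d) => (1 + ‖x‖ ^ 2) ^ N * (1 + γ * ‖x‖ ^ 2) ^ (-N)) x
          = b x * ((1 + ‖x‖ ^ 2) ^ N * (1 + γ * ‖x‖ ^ 2) ^ (-N))) ∧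
        (∀ (β : List (Fin d)) (x : EuclideanSpace ℝ (Fin d)),
          |(1 + ‖x‖ ^ 2) ^ (((α.length : ℝ) + β.length) / 2) * pderivL β b x| ≤ C β) := by
  obtain ⟨F, hF, hFeq⟩ := mu_repr N α (d := d)
  -- iterated derivatives of the symbol family `F`
  set G : List (Fin d) → (I01 → Ed d → ℝ) :=
    fun β => β.foldr
      (fun j H => fun γ x => fderiv ℝ (H γ) x (EuclideanSpace.single j 1)) F with hGdef
  have hG : ∀ β : List (Fin d), Sym d (-(α.length : ℤ) - β.length) (G β) := by
    intro β
    induction β with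
    | nil => simpa [hGdef] using hF
    | cons j β ih => exact (ih.deriv j).weaken (by simp [List.length_cons]; omega)
  have hC : ∀ β : List (Fin d), ∃ C : ℝ, 0 ≤ C ∧ ∀ (γ : I01) (x : Ed d),
      |G β γ x| ≤ C * (1 + ‖x‖ ^ 2) ^ (((-(α.length : ℤ) - β.length : ℤ):ℝ)/2) :=
    fun β => (hG β).bound
  refine ⟨fun β => (hC β).choose, fun γ hγ => ?_⟩
  set γ' : I01 := ⟨γ, hγ⟩ with hγ'
  refine ⟨F γ', hF.contDiff γ', fun x => congrFun (hFeq γ') x, ?_⟩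
  have hps : ∀ β : List (Fin d), pderivL β (F γ') = G β γ' := by
    intro β
    induction β with
    | nil => rfl
    | cons j l ih =>
        funext y
        show fderiv ℝ (pderivL l (F γ')) y _ = _
        rw [ih]
        rfl
  intro β x
  rw [hps β]
  obtain ⟨hC0, hCb⟩ := (hC β).choose_spec
  have hbd := hCb γ' x
  have hA1 : (0:ℝ) < 1 + ‖x‖ ^ 2 := posA x
  have hwpos : (0:ℝ) < (1 + ‖x‖ ^ 2) ^ (((α.length : ℝ) + β.length) / 2) :=
    Real.rpow_pos_of_pos hA1 _
  rw [abs_mul, abs_of_pos hwpos]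
  calc (1 + ‖x‖ ^ 2) ^ (((α.length : ℝ) + β.length) / 2) * |G β γ' x|
      ≤ (1 + ‖x‖ ^ 2) ^ (((α.length : ℝ) + β.length) / 2) *
          ((hC β).choose * (1 + ‖x‖ ^ 2) ^ (((-(α.length : ℤ) - β.length : ℤ):ℝ)/2)) :=
        mul_le_mul_of_nonneg_left hbd hwpos.le
    _ = (hC β).choose * ((1 + ‖x‖ ^ 2) ^ ((((α.length : ℝ) + β.length) / 2) +
          (((-(α.length : ℤ) - β.length : ℤ):ℝ)/2))) := by
        rw [Real.rpow_add hA1]; ring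
    _ = (hC β).choose := by
        rw [show (((α.length : ℝ) + β.length) / 2) +
            (((-(α.length : ℤ) - β.length : ℤ):ℝ)/2) = 0 by push_cast; ring,
          Real.rpow_zero, mul_one]
end
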